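/- Let (T_m)_m be a sequence of meshes of [0,1] with mesh sizes h_m → 0, and for each m let w_{h_m} ∈ H_{T_m} be a piecewise constant function. If there exists C > 0 such that ‖w_{h_m}‖_{1,T_m} ≤ C for all m, then there exist w ∈ L²(0,1) and a subsequence of (w_{h_m})_m converging to w strongly in L²(0,1). -/

import Mathlib

open MeasureTheory Real Filter Topology

noncomputable section

namespace Corrosion

/-- The Bernoulli function `B(x) = x / (e^x - 1)`, `B(0) = 1`. -/
def Bern (x : ℝ) : ℝ := if x = 0 then 1 else x / (Real.exp x - 1)

/-- The two species: cations `P` and electrons `N`. -/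
inductive Sp | P | N

/-- charge numbers: `z_P = 3`, `z_N = -1`. -/
def z : Sp → ℝ
  | Sp.P => 3
  | Sp.N => -1

/-- A mesh of `[0,1]`: edge points `xe 0 = x_{1/2} = 0 < xe 1 = x_{3/2} < … < xe I = x_{I+1/2} = 1`. -/
structure Mesh where
  I : ℕ
  hI : 1 ≤ I
  xe : ℕ → ℝ
  xe0 : xe 0 = 0
  xeI : xe I = 1
  mono : ∀ j, j < I → xe j < xe (j + 1)

namespace Mesh

variable (m : Mesh)

/-- cell centers `x_i` for `1 ≤ i ≤ I` , with `x_0 = 0` and `x_{I+1} = 1`. -/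
def xc (i : ℕ) : ℝ :=
  if i = 0 then 0 else if i = m.I + 1 then 1 else (m.xe (i - 1) + m.xe i) / 2

/-- `h_i = x_{i+1/2} - x_{i-1/2}` for `1 ≤ i ≤ I`. -/
def h (i : ℕ) : ℝ := m.xe i - m.xe (i - 1)

/-- `h_{i+1/2} = x_{i+1} - x_i` for `0 ≤ i ≤ I`. -/
def hp (i : ℕ) : ℝ := m.xc (i + 1) - m.xc i

/-- mesh size `h = max_{1 ≤ i ≤ I} h_i`. -/
def size : ℝ := (Finset.Icc 1 m.I).sup' ⟨1, Finset.mem_Icc.mpr ⟨le_refl 1, m.hI⟩⟩ m.h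

/-- piecewise constant function associated to a vector `(w_i)_{0 ≤ i ≤ I+1}`:
equal to `w i` on `(x_{i-1/2}, x_{i+1/2})`, to `w 0` at `x = 0`, to `w (I+1)` at `x = 1`. -/
def pw (w : ℕ → ℝ) (x : ℝ) : ℝ :=
  if x = 0 then w 0 else if x = 1 then w (m.I + 1) else w (sInf {i : ℕ | x < m.xe i})

/-- square of the discrete `H¹` norm `‖w_h‖_{1,T}`. -/
def norm1sq (w : ℕ → ℝ) : ℝ :=
  (∑ i ∈ Finset.range (m.I + 1), (w (i + 1) - w i) ^ 2 / m.hp i) + w 0 ^ 2 + w (m.I + 1) ^ 2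

/-- square of the discrete `L²` norm `‖w_h‖_0`. -/
def norm0sq (w : ℕ → ℝ) : ℝ := ∑ i ∈ Finset.Icc 1 m.I, m.h i * w i ^ 2

/-- the discrete dual norm `‖w_h‖_{-1,2,T}`. -/
def normDual (w : ℕ → ℝ) : ℝ :=
  sSup {r : ℝ | ∃ v : ℕ → ℝ, m.norm1sq v ≤ 1 ∧
    r = ∫ x in Set.Ioo (0:ℝ) 1, m.pw w x * m.pw v x}

/-- piecewise constant space derivative: on `(x_i, x_{i+1})` it equals `(w_{i+1} - w_i)/h_{i+1/2}`. -/
def dpw (w : ℕ → ℝ) (x : ℝ) : ℝ :=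
  (w (sInf {i : ℕ | x < m.xc (i + 1)} + 1) - w (sInf {i : ℕ | x < m.xc (i + 1)})) /
    m.hp (sInf {i : ℕ | x < m.xc (i + 1)})

end Mesh

/-- All the data of the corrosion model. -/
structure Data where
  lam : ℝ
  eps : ℝ
  alpha0 : ℝ
  alpha1 : ℝ
  V : ℝ
  rho : ℝ
  dPsi0 : ℝ
  dPsi1 : ℝ
  umax : Sp → ℝ
  m0 : Sp → ℝ
  k0 : Sp → ℝ
  m1 : Sp → ℝ
  k1 : Sp → ℝ
  a0 : Sp → ℝ
  b0 : Sp → ℝ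
  a1 : Sp → ℝ
  b1 : Sp → ℝ
  u0 : Sp → ℝ → ℝ
  lam_pos : 0 < lam
  umax_pos : ∀ u, 0 < umax u
  m0_pos : ∀ u, 0 < m0 u
  k0_pos : ∀ u, 0 < k0 u
  m1_pos : ∀ u, 0 < m1 u
  k1_pos : ∀ u, 0 < k1 u
  a0_mem : ∀ u, a0 u ∈ Set.Icc (0:ℝ) 1
  b0_mem : ∀ u, b0 u ∈ Set.Icc (0:ℝ) 1
  a1_mem : ∀ u, a1 u ∈ Set.Icc (0:ℝ) 1
  b1_mem : ∀ u, b1 u ∈ Set.Icc (0:ℝ) 1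
  u0_meas : ∀ u, Measurable (u0 u)

namespace Data
variable (d : Data)

/-- `ε_P = 1`, `ε_N = ε`. -/
def epsu : Sp → ℝ
  | Sp.P => 1
  | Sp.N => d.eps

def beta0 (u : Sp) (x : ℝ) : ℝ :=
  d.m0 u * Real.exp (-(z u) * d.b0 u * x) + d.k0 u * Real.exp (z u * d.a0 u * x)

def beta1 (u : Sp) (x : ℝ) : ℝ :=
  d.m1 u * Real.exp (-(z u) * d.b1 u * x) + d.k1 u * Real.exp (z u * d.a1 u * x)

def gamma0 (u : Sp) (x : ℝ) : ℝ := d.m0 u * d.umax u * Real.exp (-(z u) * d.b0 u * x)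

def gamma1 (u : Sp) (x : ℝ) : ℝ := d.k1 u * d.umax u * Real.exp (z u * d.a1 u * x)

/-- Hypotheses (H). -/
def HypH : Prop :=
  (3 * d.umax Sp.P - d.umax Sp.N + d.rho = 0) ∧
  (∀ u, ∀ᵐ x ∂(volume.restrict (Set.Ioo (0:ℝ) 1)), 0 ≤ d.u0 u x ∧ d.u0 u x ≤ d.umax u) ∧
  (-(1 / (3 * d.a0 Sp.P)) * (1 + Real.log (d.alpha0 * d.a0 Sp.P * d.k0 Sp.P)) ≤ d.dPsi0 ∧
    d.dPsi0 ≤ (1 / d.a0 Sp.N) * (1 + Real.log (d.alpha0 * d.a0 Sp.N * d.k0 Sp.N))) ∧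
  (-(1 / d.b1 Sp.N) * (1 + Real.log (d.alpha1 * d.b1 Sp.N * d.m1 Sp.N)) ≤ d.dPsi1 ∧
    d.dPsi1 ≤ (1 / (3 * d.b1 Sp.P)) * (1 + Real.log (d.alpha1 * d.b1 Sp.P * d.m1 Sp.P)))

end Data

/-- `dΨ_{i+1/2} = (Ψ_{i+1} - Ψ_i)/h_{i+1/2}`. -/
def dPsiF (m : Mesh) (Psi : ℕ → ℝ) (i : ℕ) : ℝ := (Psi (i + 1) - Psi i) / m.hp i

/-- the Scharfetter-Gummel numerical flux `F_{u,i+1/2}`. -/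
def Flux (m : Mesh) (d : Data) (u : Sp) (Psi w : ℕ → ℝ) (i : ℕ) : ℝ :=
  (Bern (z u * m.hp i * dPsiF m Psi i) * w i -
    Bern (-(z u) * m.hp i * dPsiF m Psi i) * w (i + 1)) / m.hp i

/-- The fully implicit scheme (S), with time step `Δt = T / K`.
`sol u k i` is `u_i^k` (for `u = P, N`) and `Psi k i` is `Ψ_i^k`. -/
def Scheme (m : Mesh) (d : Data) (T : ℝ) (K : ℕ)
    (sol : Sp → ℕ → ℕ → ℝ) (Psi : ℕ → ℕ → ℝ) : Prop :=
  (∀ u i, 1 ≤ i → i ≤ m.I →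
    sol u 0 i = (1 / m.h i) * ∫ x in Set.Ioo (m.xe (i - 1)) (m.xe i), d.u0 u x) ∧
  (∀ k, k < K → ∀ i, 1 ≤ i → i ≤ m.I →
    -(d.lam ^ 2) * (dPsiF m (Psi (k + 1)) i - dPsiF m (Psi (k + 1)) (i - 1)) =
      m.h i * (3 * sol Sp.P (k + 1) i - sol Sp.N (k + 1) i + d.rho)) ∧
  (∀ u k, k < K → ∀ i, 1 ≤ i → i ≤ m.I →
    d.epsu u * m.h i * (sol u (k + 1) i - sol u k i) / (T / K) +
      Flux m d u (Psi (k + 1)) (sol u (k + 1)) i -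
      Flux m d u (Psi (k + 1)) (sol u (k + 1)) (i - 1) = 0) ∧
  (∀ k, k < K → Psi (k + 1) 0 - d.alpha0 * dPsiF m (Psi (k + 1)) 0 = d.dPsi0) ∧
  (∀ k, k < K →
    Psi (k + 1) (m.I + 1) + d.alpha1 * dPsiF m (Psi (k + 1)) m.I = d.V - d.dPsi1) ∧
  (∀ u k, k < K →
    -(Flux m d u (Psi (k + 1)) (sol u (k + 1)) 0) =
      d.beta0 u (Psi (k + 1) 0) * sol u (k + 1) 0 - d.gamma0 u (Psi (k + 1) 0)) ∧
  (∀ u k, k < K →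
    Flux m d u (Psi (k + 1)) (sol u (k + 1)) m.I =
      d.beta1 u (d.V - Psi (k + 1) (m.I + 1)) * sol u (k + 1) (m.I + 1) -
      d.gamma1 u (d.V - Psi (k + 1) (m.I + 1)))

/-- The stability property `0 ≤ u_i^k ≤ u^max` for all `i, k`. -/
def Stable (m : Mesh) (d : Data) (K : ℕ) (sol : Sp → ℕ → ℕ → ℝ) : Prop :=
  ∀ u k, k ≤ K → ∀ i, i ≤ m.I + 1 → 0 ≤ sol u k i ∧ sol u k i ≤ d.umax u

/-- the approximate space-time solution `w_{h,Δt}`, equal to the piecewise constant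
function built on `w^{k+1}` for `t ∈ [t^k, t^{k+1})`, with `Δt = T/K`. -/
def apx (m : Mesh) (T : ℝ) (K : ℕ) (w : ℕ → ℕ → ℝ) (x t : ℝ) : ℝ :=
  m.pw (w (Nat.floor (t / (T / K)) + 1)) x

/-- the discrete space derivative `∂_{x,T} w_{h,Δt}`. -/
def dapx (m : Mesh) (T : ℝ) (K : ℕ) (w : ℕ → ℕ → ℝ) (x t : ℝ) : ℝ :=
  m.dpw (w (Nat.floor (t / (T / K)) + 1)) x


/-- hyperbolic cotangent `coth y = cosh y / sinh y`. -/
def coth (x : ℝ) : ℝ := Real.cosh x / Real.sinh x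

/-- approximate trace at `x = 0`: `t ∈ [t^k, t^{k+1}) ↦ w_0^{k+1}`. -/
def trace0 (T : ℝ) (K : ℕ) (w : ℕ → ℕ → ℝ) (t : ℝ) : ℝ :=
  w (Nat.floor (t / (T / K)) + 1) 0

/-- approximate trace at `x = 1`: `t ∈ [t^k, t^{k+1}) ↦ w_{I+1}^{k+1}`. -/
def trace1 (m : Mesh) (T : ℝ) (K : ℕ) (w : ℕ → ℕ → ℝ) (t : ℝ) : ℝ :=
  w (Nat.floor (t / (T / K)) + 1) (m.I + 1)

/-- the measure on `(0,1) × (0,T)` (space × time). -/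
def stMeasure (T : ℝ) : MeasureTheory.Measure (ℝ × ℝ) :=
  (MeasureTheory.volume.restrict (Set.Ioo (0:ℝ) 1)).prod
    (MeasureTheory.volume.restrict (Set.Ioo (0:ℝ) T))

end Corrosion

/-!
The discrete `H¹` norm controls `|w_0|` and, by Cauchy–Schwarz against the weights `h_{i+1/2}`
(which sum to `1`), the total variation `∑ |w_{i+1} - w_i|`. Hence `w_h` is, on `[0,1]`, the
difference of two monotone step functions bounded uniformly in `m` (the cumulative variation
`|w_0| + ∑_{j<i} |w_{j+1} - w_j|` and its difference with `w_i`). Helly's selection theorem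
yields a subsequence along which both converge outside a countable set, so almost everywhere,
and dominated convergence upgrades this to convergence in `L²(0,1)`.
-/

theorem exists_subseq_tendsto_of_abs_le {ι : Type*} [Countable ι] {f : ℕ → ι → ℝ} {M : ℝ}
    (hbd : ∀ n i, |f n i| ≤ M) :
    ∃ (G : ι → ℝ) (φ : ℕ → ℕ), StrictMono φ ∧
      ∀ i, Tendsto (fun n => f (φ n) i) atTop (𝓝 (G i)) := by
  let u : ℕ → ι → Set.Icc (-M) M := fun n i => ⟨f n i, abs_le.mp (hbd n i)⟩
  obtain ⟨G, -, φ, hφ, hconv⟩ := isCompact_univ.tendsto_subseq fun n => Set.mem_univ (u n)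
  exact ⟨fun i => G i, φ, hφ, fun i =>
    (continuous_subtype_val.tendsto _).comp (((continuous_apply i).tendsto G).comp hconv)⟩

theorem tendsto_of_monotone_of_tendsto_rat {f : ℕ → ℝ → ℝ} (hf : ∀ n, Monotone (f n))
    {G : ℚ → ℝ} (hG : ∀ q : ℚ, Tendsto (fun n => f n q) atTop (𝓝 (G q))) {x c : ℝ}
    (hlo : ∀ a < c, ∃ q : ℚ, (q : ℝ) < x ∧ a < G q)
    (hhi : ∀ b > c, ∃ r : ℚ, x < r ∧ G r < b) :
    Tendsto (fun n => f n x) atTop (𝓝 c) := by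
  refine tendsto_order.2 ⟨fun a ha => ?_, fun b hb => ?_⟩
  · obtain ⟨q, hqx, haq⟩ := hlo a ha
    filter_upwards [(hG q).eventually_const_lt haq] with n hn
    exact hn.trans_le (hf n hqx.le)
  · obtain ⟨r, hxr, hrb⟩ := hhi b hb
    filter_upwards [(hG r).eventually_lt_const hrb] with n hn
    exact (hf n hxr.le).trans_lt hn

/-- **Helly's selection theorem**. -/
theorem exists_subseq_tendsto_of_monotone {f : ℕ → ℝ → ℝ} {M : ℝ} (hf : ∀ n, Monotone (f n))
    (hbd : ∀ n x, |f n x| ≤ M) :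
    ∃ (g : ℝ → ℝ) (φ : ℕ → ℕ), Monotone g ∧ StrictMono φ ∧
      ∀ x, ContinuousAt g x → Tendsto (fun n => f (φ n) x) atTop (𝓝 (g x)) := by
  obtain ⟨G, φ, hφ, hG⟩ :=
    exists_subseq_tendsto_of_abs_le (f := fun n (q : ℚ) => f n q) fun n q => hbd n q
  have hGmono : Monotone G := fun q r hqr =>
    le_of_tendsto_of_tendsto' (hG q) (hG r) fun n => hf _ (by exact_mod_cast hqr)
  let S : ℝ → Set ℝ := fun x => G '' {q : ℚ | (q : ℝ) < x}
  have hS_nonempty : ∀ x, (S x).Nonempty := fun x =>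
    let ⟨q, hq⟩ := exists_rat_lt x; ⟨G q, q, hq, rfl⟩
  have hS_le : ∀ (x : ℝ) (r : ℚ), x ≤ r → ∀ y ∈ S x, y ≤ G r := by
    rintro x r hxr _ ⟨q, hq, rfl⟩
    exact hGmono (by exact_mod_cast (hq.trans_le hxr).le)
  have hS_bdd : ∀ x, BddAbove (S x) := fun x =>
    let ⟨r, hr⟩ := exists_rat_gt x; ⟨G r, hS_le x r hr.le⟩
  let g : ℝ → ℝ := fun x => sSup (S x)
  have hgmono : Monotone g := fun x y hxy =>
    csSup_le_csSup (hS_bdd y) (hS_nonempty x) (Set.image_mono fun q hq => lt_of_lt_of_le hq hxy)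
  refine ⟨g, φ, hgmono, hφ, fun x hx => tendsto_of_monotone_of_tendsto_rat (fun n => hf (φ n)) hG
    (fun a ha => ?_) (fun b hb => ?_)⟩
  · obtain ⟨_, ⟨q, hq, rfl⟩, haq⟩ := exists_lt_of_lt_csSup (hS_nonempty x) ha
    exact ⟨q, hq, haq⟩
  · obtain ⟨y, hgy, hxy⟩ :=
      (((hx.eventually_lt_const hb).filter_mono nhdsWithin_le_nhds).and
        self_mem_nhdsWithin : ∀ᶠ y in 𝓝[>] x, g y < b ∧ x < y).exists
    obtain ⟨r, hxr, hry⟩ := exists_rat_btwn hxy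
    exact ⟨r, hxr, (le_csSup (hS_bdd y) ⟨r, hry, rfl⟩).trans_lt hgy⟩

theorem exists_subseq_ae_tendsto_sub_of_monotone {P Q : ℕ → ℝ → ℝ} {M : ℝ}
    (hP : ∀ n, Monotone (P n)) (hQ : ∀ n, Monotone (Q n))
    (hPbd : ∀ n x, |P n x| ≤ M) (hQbd : ∀ n x, |Q n x| ≤ M) :
    ∃ (g : ℝ → ℝ) (φ : ℕ → ℕ), StrictMono φ ∧
      ∀ᵐ x, Tendsto (fun n => P (φ n) x - Q (φ n) x) atTop (𝓝 (g x)) := by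
  obtain ⟨g₁, φ₁, hg₁, hφ₁, hlim₁⟩ := exists_subseq_tendsto_of_monotone hP hPbd
  obtain ⟨g₂, φ₂, hg₂, hφ₂, hlim₂⟩ :=
    exists_subseq_tendsto_of_monotone (fun n => hQ (φ₁ n)) fun n => hQbd (φ₁ n)
  refine ⟨g₁ - g₂, φ₁ ∘ φ₂, hφ₁.comp hφ₂, ?_⟩
  filter_upwards [hg₁.countable_not_continuousAt.ae_notMem volume,
    hg₂.countable_not_continuousAt.ae_notMem volume] with x hx₁ hx₂
  exact ((hlim₁ x (not_not.1 hx₁)).comp hφ₂.tendsto_atTop).sub (hlim₂ x (not_not.1 hx₂))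

theorem memLp_two_and_tendsto_integral_sq_sub_of_ae_tendsto {α : Type*} [MeasurableSpace α]
    {μ : Measure α} [IsFiniteMeasure μ] {f : ℕ → α → ℝ} {g : α → ℝ} {M : ℝ}
    (hf : ∀ n, AEStronglyMeasurable (f n) μ) (hbd : ∀ n, ∀ᵐ x ∂μ, |f n x| ≤ M)
    (hlim : ∀ᵐ x ∂μ, Tendsto (fun n => f n x) atTop (𝓝 (g x))) :
    MemLp g 2 μ ∧ Tendsto (fun n => ∫ x, (f n x - g x) ^ 2 ∂μ) atTop (𝓝 0) := by
  have hg : AEStronglyMeasurable g μ := aestronglyMeasurable_of_tendsto_ae atTop hf hlim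
  have hgbd : ∀ᵐ x ∂μ, |g x| ≤ M := by
    filter_upwards [hlim, ae_all_iff.2 hbd] with x hx hxbd
    exact le_of_tendsto' hx.abs hxbd
  refine ⟨MemLp.of_bound hg M (by simpa only [Real.norm_eq_abs] using hgbd), ?_⟩
  have hsq_bd : ∀ n, ∀ᵐ x ∂μ, ‖(f n x - g x) ^ 2‖ ≤ (2 * M) ^ 2 := fun n => by
    filter_upwards [hbd n, hgbd] with x hfx hgx
    rw [Real.norm_eq_abs, abs_pow]
    exact pow_le_pow_left₀ (abs_nonneg _)
      (show |f n x - g x| ≤ 2 * M by linarith [abs_sub (f n x) (g x)]) 2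
  have hsq_lim : ∀ᵐ x ∂μ, Tendsto (fun n => (f n x - g x) ^ 2) atTop (𝓝 0) := by
    filter_upwards [hlim] with x hx
    simpa using (hx.sub_const (g x)).pow 2
  simpa using tendsto_integral_of_dominated_convergence (fun _ => (2 * M) ^ 2)
    (fun n => ((hf n).sub hg).pow 2) (integrable_const _) hsq_bd hsq_lim

def cumulativeVariation (v : ℕ → ℝ) (i : ℕ) : ℝ :=
  |v 0| + ∑ j ∈ Finset.range i, |v (j + 1) - v j|

theorem monotone_cumulativeVariation (v : ℕ → ℝ) : Monotone (cumulativeVariation v) :=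
  monotone_nat_of_le_succ fun i => by
    simp only [cumulativeVariation, Finset.sum_range_succ]
    linarith [abs_nonneg (v (i + 1) - v i)]

theorem monotone_cumulativeVariation_sub (v : ℕ → ℝ) :
    Monotone fun i => cumulativeVariation v i - v i :=
  monotone_nat_of_le_succ fun i => by
    simp only [cumulativeVariation, Finset.sum_range_succ]
    linarith [le_abs_self (v (i + 1) - v i)]

theorem abs_le_cumulativeVariation (v : ℕ → ℝ) (i : ℕ) : |v i| ≤ cumulativeVariation v i := by
  induction i with
  | zero => simp [cumulativeVariation]
  | succ i ih =>
    simp only [cumulativeVariation, Finset.sum_range_succ] at ih ⊢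
    linarith [abs_sub_abs_le_abs_sub (v (i + 1)) (v i)]

namespace Corrosion
namespace Mesh

variable (m : Mesh)

theorem xc_zero : m.xc 0 = 0 := if_pos rfl

theorem xc_last : m.xc (m.I + 1) = 1 := by
  simp [xc]

theorem xc_of_le {i : ℕ} (h1 : 1 ≤ i) (h2 : i ≤ m.I) :
    m.xc i = (m.xe (i - 1) + m.xe i) / 2 := by
  unfold xc
  rw [if_neg (by omega), if_neg (by omega)]

theorem hp_pos {i : ℕ} (hi : i ≤ m.I) : 0 < m.hp i := by
  have hmono : ∀ j, j < m.I → m.xe j < m.xe (j + 1) := m.mono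
  have hI := m.hI
  rw [hp, sub_pos]
  rcases Nat.eq_zero_or_pos i with rfl | hi0
  · rw [m.xc_zero, m.xc_of_le le_rfl hI, Nat.sub_self, m.xe0]
    linarith [m.xe0 ▸ hmono 0 hI]
  have hlt : m.xe (i - 1) < m.xe i := by
    simpa [Nat.sub_add_cancel hi0] using hmono (i - 1) (by omega)
  rw [m.xc_of_le hi0 hi]
  rcases hi.lt_or_eq with hi' | rfl
  · rw [m.xc_of_le (i := i + 1) (by omega) hi', Nat.add_sub_cancel]
    linarith [hmono i hi']
  · rw [m.xc_last, ← m.xeI]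
    linarith

theorem sum_hp : ∑ i ∈ Finset.range (m.I + 1), m.hp i = 1 := by
  simp [hp, Finset.sum_range_sub m.xc, m.xc_last, m.xc_zero]

theorem cumulativeVariation_le (v : ℕ → ℝ) :
    cumulativeVariation v (m.I + 1) ≤ 2 * √(m.norm1sq v) := by
  have hpos : ∀ i ∈ Finset.range (m.I + 1), 0 < m.hp i := fun i hi =>
    m.hp_pos (Nat.lt_succ_iff.1 (Finset.mem_range.1 hi))
  set S := ∑ i ∈ Finset.range (m.I + 1), (v (i + 1) - v i) ^ 2 / m.hp i
  have hS : 0 ≤ S := Finset.sum_nonneg fun i hi => div_nonneg (sq_nonneg _) (hpos i hi).le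
  have hnorm : m.norm1sq v = S + v 0 ^ 2 + v (m.I + 1) ^ 2 := rfl
  have hv0 : |v 0| ≤ √(m.norm1sq v) := Real.abs_le_sqrt (by nlinarith [sq_nonneg (v (m.I + 1))])
  have hjumps : ∑ i ∈ Finset.range (m.I + 1), |v (i + 1) - v i| ≤ √(m.norm1sq v) := by
    have hsedrakyan := Finset.sq_sum_div_le_sum_sq_div (Finset.range (m.I + 1))
      (fun i => |v (i + 1) - v i|) hpos
    simp only [m.sum_hp, div_one, sq_abs] at hsedrakyan
    refine (le_abs_self _).trans (Real.abs_le_sqrt ?_)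
    nlinarith [sq_nonneg (v 0), sq_nonneg (v (m.I + 1))]
  simp only [cumulativeVariation]
  linarith

def cellIndex (x : ℝ) : ℕ :=
  if x = 0 then 0 else if x = 1 then m.I + 1 else sInf {i : ℕ | x < m.xe i}

theorem pw_eq_apply_cellIndex (v : ℕ → ℝ) (x : ℝ) : m.pw v x = v (m.cellIndex x) := by
  unfold pw cellIndex
  split_ifs <;> rfl

theorem cellIndex_le {x : ℝ} (hx : x ∈ Set.Icc 0 1) : m.cellIndex x ≤ m.I + 1 := by
  unfold cellIndex
  split_ifs with h0 h1
  · exact Nat.zero_le _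
  · exact le_rfl
  · exact (Nat.sInf_le (by simp [m.xeI, lt_of_le_of_ne hx.2 h1])).trans (Nat.le_succ _)

theorem monotoneOn_cellIndex : MonotoneOn m.cellIndex (Set.Icc 0 1) := by
  intro x hx y hy hxy
  by_cases hx0 : x = 0
  · simp [cellIndex, hx0]
  by_cases hy1 : y = 1
  · simpa [hy1, cellIndex] using m.cellIndex_le hx
  have hy0 : y ≠ 0 := (lt_of_lt_of_le (lt_of_le_of_ne hx.1 (Ne.symm hx0)) hxy).ne'
  have hx1 : x ≠ 1 := (lt_of_le_of_lt hxy (lt_of_le_of_ne hy.2 hy1)).ne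
  simp only [cellIndex, hx0, hy0, hx1, hy1, if_false]
  exact csInf_le_csInf (OrderBot.bddBelow _)
    ⟨m.I, by simp [m.xeI, lt_of_le_of_ne hy.2 hy1]⟩ fun i hi => lt_of_le_of_lt hxy hi

theorem exists_monotone_sub_eq_pw (v : ℕ → ℝ) {B : ℝ}
    (hB : cumulativeVariation v (m.I + 1) ≤ B) :
    ∃ P Q : ℝ → ℝ, Monotone P ∧ Monotone Q ∧ (∀ x, |P x| ≤ 2 * B) ∧ (∀ x, |Q x| ≤ 2 * B) ∧
      ∀ x ∈ Set.Icc (0 : ℝ) 1, m.pw v x = P x - Q x := by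
  let k : ℝ → ℕ := fun x => m.cellIndex (Set.projIcc 0 1 zero_le_one x)
  have hk_mono : Monotone k := fun x y hxy =>
    m.monotoneOn_cellIndex (Subtype.prop _) (Subtype.prop _) (Set.monotone_projIcc _ hxy)
  have hk_le : ∀ x, k x ≤ m.I + 1 := fun x => m.cellIndex_le (Subtype.prop _)
  have hvar_le : ∀ x, cumulativeVariation v (k x) ≤ B := fun x =>
    (monotone_cumulativeVariation v (hk_le x)).trans hB
  have hbd : ∀ x, |cumulativeVariation v (k x)| ≤ 2 * B ∧
      |cumulativeVariation v (k x) - v (k x)| ≤ 2 * B := fun x => by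
    have hv := abs_le.1 (abs_le_cumulativeVariation v (k x))
    have hpos := (abs_nonneg (v (k x))).trans (abs_le_cumulativeVariation v (k x))
    constructor <;> rw [abs_le] <;> constructor <;> linarith [hvar_le x]
  refine ⟨fun x => cumulativeVariation v (k x), fun x => cumulativeVariation v (k x) - v (k x),
    (monotone_cumulativeVariation v).comp hk_mono,
    (monotone_cumulativeVariation_sub v).comp hk_mono,
    fun x => (hbd x).1, fun x => (hbd x).2, fun x hx => ?_⟩
  simp [k, m.pw_eq_apply_cellIndex, Set.projIcc_of_mem _ hx]

end Mesh
end Corrosion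

open Corrosion in
theorem discrete_H1_compactness_general
    (msh : ℕ → Mesh)
    (w : ℕ → ℕ → ℝ) (C : ℝ)
    (hb : ∀ n, Real.sqrt ((msh n).norm1sq (w n)) ≤ C) :
    ∃ (wlim : ℝ → ℝ) (φ : ℕ → ℕ), StrictMono φ ∧
      MemLp wlim 2 (volume.restrict (Set.Ioo (0:ℝ) 1)) ∧
      Filter.Tendsto
        (fun n => ∫ x in Set.Ioo (0:ℝ) 1, ((msh (φ n)).pw (w (φ n)) x - wlim x) ^ 2)
        Filter.atTop (nhds 0) := by
  have hvar : ∀ n, cumulativeVariation (w n) ((msh n).I + 1) ≤ 2 * C := fun n =>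
    ((msh n).cumulativeVariation_le (w n)).trans (by linarith [hb n])
  choose P Q hP hQ hPbd hQbd hpw using fun n => (msh n).exists_monotone_sub_eq_pw (w n) (hvar n)
  obtain ⟨g, φ, hφ, hlim⟩ := exists_subseq_ae_tendsto_sub_of_monotone hP hQ hPbd hQbd
  obtain ⟨hg, hL2⟩ := memLp_two_and_tendsto_integral_sq_sub_of_ae_tendsto
    (μ := volume.restrict (Set.Ioo (0 : ℝ) 1)) (f := fun n x => P (φ n) x - Q (φ n) x)
    (fun n => ((hP (φ n)).measurable.sub (hQ (φ n)).measurable).aestronglyMeasurable)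
    (fun n => ae_of_all _ fun x => (abs_sub _ _).trans (add_le_add (hPbd _ x) (hQbd _ x)))
    (ae_restrict_of_ae hlim)
  refine ⟨g, φ, hφ, hg, hL2.congr fun n => setIntegral_congr_fun measurableSet_Ioo fun x hx => ?_⟩
  rw [hpw _ x (Set.Ioo_subset_Icc_self hx)]

open Corrosion in
/-- discrete `H¹`-bounded sequences are relatively compact in `L²(0,1)`. -/
theorem discrete_H1_compactness
    (msh : ℕ → Mesh) (hsz : Filter.Tendsto (fun n => (msh n).size) Filter.atTop (nhds 0))
    (w : ℕ → ℕ → ℝ) (C : ℝ) (hC : 0 < C)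
    (hb : ∀ n, Real.sqrt ((msh n).norm1sq (w n)) ≤ C) :
    ∃ (wlim : ℝ → ℝ) (φ : ℕ → ℕ), StrictMono φ ∧
      MemLp wlim 2 (volume.restrict (Set.Ioo (0:ℝ) 1)) ∧
      Filter.Tendsto
        (fun n => ∫ x in Set.Ioo (0:ℝ) 1, ((msh (φ n)).pw (w (φ n)) x - wlim x) ^ 2)
        Filter.atTop (nhds 0) :=
  discrete_H1_compactness_general msh w C hb
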